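/- arXiv:1308.1652 — 2 statements merged into one kernel-verified Lean document; each statement's English description precedes it below -/
import Mathlib

section
/- If n ≥ 4 is even, then q(F_n) is the largest real root of the polynomial equation x³ - (n+3)x² + 3nx - 2n + 4 = 0; that is, q(F_n)³ - (n+3)q(F_n)² + 3n·q(F_n) - 2n + 4 = 0, and every real root x of this polynomial satisfies x ≤ q(F_n). -/
open SimpleGraph

/-- The signless Laplacian matrix `Q(G) = D(G) + A(G)` of a finite simple graph. -/
noncomputable def signlessLaplacian {V : Type*} [Fintype V] [DecidableEq V]
    (G : SimpleGraph V) : Matrix V V ℝ :=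
  letI := Classical.decRel G.Adj
  Matrix.diagonal (fun v => (G.degree v : ℝ)) + G.adjMatrix ℝ

/-- The `Q`-index of a graph: the largest eigenvalue of its signless Laplacian. -/
noncomputable def qIndex {V : Type*} [Fintype V] [DecidableEq V]
    (G : SimpleGraph V) : ℝ :=
  sSup (spectrum ℝ (signlessLaplacian G))

/-- `H` is contained in `G` as a (not necessarily induced) subgraph. -/
def ContainsCopy {α β : Type*} (H : SimpleGraph α) (G : SimpleGraph β) : Prop :=
  ∃ f : α ↪ β, ∀ ⦃a b⦄, H.Adj a b → G.Adj (f a) (f b)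

/-- The friendship-type graph `F_n`: vertex `0` is dominating; the remaining
vertices are paired `(1,2), (3,4), …`; for even `n` the last vertex is a pendant. -/
def friendshipGraph (n : ℕ) : SimpleGraph (Fin n) where
  Adj i j := i ≠ j ∧ (i.val = 0 ∨ j.val = 0 ∨ (i.val + 1) / 2 = (j.val + 1) / 2)
  symm := by
    constructor
    intro i j ⟨h1, h2⟩
    exact ⟨h1.symm, by tauto⟩
  loopless := by
    constructor
    intro i ⟨h1, _⟩
    exact h1 rfl

/-- The graph `S_{n,k} = K_k ∨ \overline{K}_{n-k}`: the first `k` vertices form a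
complete graph joined to an independent set on the remaining `n - k` vertices. -/
def sGraph (n k : ℕ) : SimpleGraph (Fin n) where
  Adj i j := i ≠ j ∧ (i.val < k ∨ j.val < k)
  symm := by
    constructor
    intro i j ⟨h1, h2⟩
    exact ⟨h1.symm, h2.symm⟩
  loopless := by
    constructor
    intro i ⟨h1, _⟩
    exact h1 rfl

/-- The number of edges of `G` with one endpoint in `X` and the other in `Y`
(counted as ordered pairs in `X × Y`; for disjoint `X`, `Y` this is `e(X,Y)`). -/
noncomputable def edgesBetween {V : Type*} [Fintype V] [DecidableEq V]
    (G : SimpleGraph V) (X Y : Finset V) : ℕ :=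
  letI := Classical.decRel G.Adj
  ((X ×ˢ Y).filter fun p => G.Adj p.1 p.2).card

/-- The number of edges of `G` with both endpoints in `X`. -/
noncomputable def edgesWithin {V : Type*} [Fintype V] [DecidableEq V]
    (G : SimpleGraph V) (X : Finset V) : ℕ :=
  edgesBetween G X X / 2

/-!
Write `n = k + 2`: vertex `0` is the center, `k + 1` the pendant, and `1, …, k` form `k / 2`
pairs. Let `p` be the cubic. For every real `x`, the vector `w` equal to `(x - 1)(x - 3)` at the
center, `x - 3` at the pendant and `x - 1` on the pairs satisfies `Q w = x w - p(x) e₀`, so every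
root of `p` is a `Q`-eigenvalue. Conversely, an eigenvector `v` for `q ∉ {1, 3}` is constant on each
pair, with `(q - 3) vᵢ = v₀` there and `(q - 1) v_pendant = v₀`; hence `v₀ ≠ 0`, and the center row
gives `p(q) v₀ = 0`. As `p(3) = 4 - 2n < 0`, `p` has a root above `3`, so the largest eigenvalue
exceeds `3` and is the largest root of `p`.
-/

open Matrix Finset

theorem Matrix.mem_spectrum_iff_exists_mulVec_eq_smul {K ι : Type*} [Field K] [Fintype ι]
    [DecidableEq ι] (A : Matrix ι ι K) (μ : K) :
    μ ∈ spectrum K A ↔ ∃ v ≠ 0, A *ᵥ v = μ • v := by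
  rw [← spectrum_toLin', ← Module.End.hasEigenvalue_iff_mem_spectrum,
    Module.End.hasEigenvalue_iff, Submodule.ne_bot_iff]
  simp only [Module.End.mem_eigenspace_iff, toLin'_apply, and_comm]

theorem signlessLaplacian_mulVec_apply {V : Type*} [Fintype V] [DecidableEq V]
    (G : SimpleGraph V) [DecidableRel G.Adj] (v : V → ℝ) (i : V) :
    (signlessLaplacian G *ᵥ v) i = G.degree i * v i + ∑ j ∈ G.neighborFinset i, v j := by
  simp only [signlessLaplacian, add_mulVec, Pi.add_apply, mulVec_diagonal,
    adjMatrix_mulVec_apply]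
  congr!

def friendshipCubic (n x : ℝ) : ℝ := x ^ 3 - (n + 3) * x ^ 2 + 3 * n * x - 2 * n + 4

theorem exists_friendshipCubic_root_gt_three {n : ℝ} (hn : 2 < n) :
    ∃ r, 3 < r ∧ friendshipCubic n r = 0 := by
  have hcont : ContinuousOn (friendshipCubic n) (Set.Icc 3 (n + 3)) := by
    unfold friendshipCubic; fun_prop
  have h0 : (0 : ℝ) ∈ Set.Ioo (friendshipCubic n 3) (friendshipCubic n (n + 3)) := by
    constructor <;> · unfold friendshipCubic; nlinarith
  obtain ⟨r, hr, hr0⟩ := intermediate_value_Ioo (by linarith) hcont h0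
  exact ⟨r, hr.1, hr0⟩

instance (n : ℕ) : DecidableRel (friendshipGraph n).Adj := fun i j =>
  inferInstanceAs (Decidable (i ≠ j ∧ (i.val = 0 ∨ j.val = 0 ∨ (i.val + 1) / 2 = (j.val + 1) / 2)))

namespace friendshipGraph

variable {k : ℕ}

def pairedVertex (j : Fin k) : Fin (k + 2) := j.castSucc.succ

-- `pairedVertex j` is the vertex `j + 1`, so the pairs `{2i+1, 2i+2}` of `F_n` are `{2i, 2i+1}`
-- in the index `j`.
def partner (hk : Even k) (j : Fin k) : Fin k :=
  ⟨j + 1 - 2 * (j % 2), by obtain ⟨m, rfl⟩ := hk; omega⟩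

@[simp]
theorem val_pairedVertex (j : Fin k) : (pairedVertex j).val = j + 1 := rfl

theorem pairedVertex_ne_zero (j : Fin k) : pairedVertex j ≠ 0 := Fin.succ_ne_zero _

@[simp]
theorem partner_partner (hk : Even k) (j : Fin k) : partner hk (partner hk j) = j := by
  simp only [partner, Fin.ext_iff]; omega

theorem eq_zero_or_eq_last_or_exists_pairedVertex (i : Fin (k + 2)) :
    i = 0 ∨ i = Fin.last (k + 1) ∨ ∃ j, i = pairedVertex j := by
  induction i using Fin.cases with
  | zero => exact Or.inl rfl
  | succ i =>
    induction i using Fin.lastCases with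
    | last => exact Or.inr (Or.inl rfl)
    | cast j => exact Or.inr (Or.inr ⟨j, rfl⟩)

theorem adj_zero_iff (i : Fin (k + 2)) : (friendshipGraph (k + 2)).Adj 0 i ↔ i ≠ 0 := by
  simp [friendshipGraph, eq_comm]

theorem adj_last_iff (hk : Even k) (i : Fin (k + 2)) :
    (friendshipGraph (k + 2)).Adj (Fin.last (k + 1)) i ↔ i = 0 := by
  obtain ⟨m, rfl⟩ := hk
  have := i.isLt
  simp only [friendshipGraph, ne_eq, Fin.ext_iff, Fin.val_last, Fin.val_zero]
  omega

theorem adj_pairedVertex_iff (hk : Even k) (j : Fin k) (i : Fin (k + 2)) :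
    (friendshipGraph (k + 2)).Adj (pairedVertex j) i ↔
      i = 0 ∨ i = pairedVertex (partner hk j) := by
  obtain ⟨m, rfl⟩ := hk
  have := i.isLt
  simp only [friendshipGraph, partner, ne_eq, Fin.ext_iff, val_pairedVertex, Fin.val_zero]
  omega

theorem sum_univ_vertices (v : Fin (k + 2) → ℝ) :
    ∑ i, v i = v 0 + v (Fin.last (k + 1)) + ∑ j, v (pairedVertex j) := by
  rw [Fin.sum_univ_succ, Fin.sum_univ_castSucc, Fin.succ_last]
  simp only [pairedVertex]
  ring

theorem signlessLaplacian_mulVec_zero (v : Fin (k + 2) → ℝ) :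
    (signlessLaplacian (friendshipGraph (k + 2)) *ᵥ v) 0
      = (k + 1) * v 0 + v (Fin.last (k + 1)) + ∑ j, v (pairedVertex j) := by
  have hN : (friendshipGraph (k + 2)).neighborFinset 0 = univ.erase 0 := by
    ext i; simp [adj_zero_iff]
  rw [signlessLaplacian_mulVec_apply, ← card_neighborFinset_eq_degree, hN,
    sum_erase_eq_sub (mem_univ _), sum_univ_vertices, card_erase_of_mem (mem_univ _), card_univ,
    Fintype.card_fin]
  push_cast
  ring

theorem signlessLaplacian_mulVec_last (hk : Even k) (v : Fin (k + 2) → ℝ) :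
    (signlessLaplacian (friendshipGraph (k + 2)) *ᵥ v) (Fin.last (k + 1))
      = v (Fin.last (k + 1)) + v 0 := by
  have hN : (friendshipGraph (k + 2)).neighborFinset (Fin.last (k + 1)) = {0} := by
    ext i; simp [adj_last_iff hk]
  rw [signlessLaplacian_mulVec_apply, ← card_neighborFinset_eq_degree, hN, card_singleton,
    sum_singleton, Nat.cast_one, one_mul]

theorem signlessLaplacian_mulVec_pairedVertex (hk : Even k) (v : Fin (k + 2) → ℝ) (j : Fin k) :
    (signlessLaplacian (friendshipGraph (k + 2)) *ᵥ v) (pairedVertex j)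
      = 2 * v (pairedVertex j) + v 0 + v (pairedVertex (partner hk j)) := by
  have hN : (friendshipGraph (k + 2)).neighborFinset (pairedVertex j)
      = {0, pairedVertex (partner hk j)} := by
    ext i; simp [adj_pairedVertex_iff hk]
  have h0 : (0 : Fin (k + 2)) ∉ ({pairedVertex (partner hk j)} : Finset _) :=
    Finset.notMem_singleton.2 (pairedVertex_ne_zero _).symm
  rw [signlessLaplacian_mulVec_apply, ← card_neighborFinset_eq_degree, hN,
    card_insert_of_notMem h0, card_singleton, sum_insert h0, sum_singleton]
  push_cast
  ring

def testVector (x : ℝ) (i : Fin (k + 2)) : ℝ :=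
  if i = 0 then (x - 1) * (x - 3) else if i = Fin.last (k + 1) then x - 3 else x - 1

@[simp]
theorem testVector_zero (x : ℝ) : testVector (k := k) x 0 = (x - 1) * (x - 3) := if_pos rfl

@[simp]
theorem testVector_last (x : ℝ) : testVector x (Fin.last (k + 1)) = x - 3 := by
  simp [testVector, Fin.ext_iff]

@[simp]
theorem testVector_pairedVertex (x : ℝ) (j : Fin k) : testVector x (pairedVertex j) = x - 1 := by
  simp [testVector, Fin.ext_iff, j.isLt.ne]

theorem signlessLaplacian_mulVec_testVector (hk : Even k) (x : ℝ) :
    signlessLaplacian (friendshipGraph (k + 2)) *ᵥ testVector x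
      = x • testVector x - Pi.single 0 (friendshipCubic (k + 2 : ℕ) x) := by
  funext i
  rcases eq_zero_or_eq_last_or_exists_pairedVertex i with rfl | rfl | ⟨j, rfl⟩
  · rw [Pi.sub_apply, Pi.single_eq_same, signlessLaplacian_mulVec_zero]
    simp only [testVector_zero, testVector_last, testVector_pairedVertex, sum_const, card_univ,
      Fintype.card_fin, nsmul_eq_mul, Pi.smul_apply, smul_eq_mul, friendshipCubic]
    push_cast
    ring
  · rw [Pi.sub_apply, Pi.single_eq_of_ne Fin.last_pos'.ne', signlessLaplacian_mulVec_last hk]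
    simp only [testVector_zero, testVector_last, Pi.smul_apply, smul_eq_mul]
    ring
  · rw [Pi.sub_apply, Pi.single_eq_of_ne (pairedVertex_ne_zero j),
      signlessLaplacian_mulVec_pairedVertex hk]
    simp only [testVector_zero, testVector_pairedVertex, Pi.smul_apply, smul_eq_mul]
    ring

theorem mem_spectrum_of_friendshipCubic_eq_zero (hk : Even k) (hk0 : 0 < k) {x : ℝ}
    (hx : friendshipCubic (k + 2 : ℕ) x = 0) :
    x ∈ spectrum ℝ (signlessLaplacian (friendshipGraph (k + 2))) := by
  rw [mem_spectrum_iff_exists_mulVec_eq_smul]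
  refine ⟨testVector x, fun h => ?_,
    by rw [signlessLaplacian_mulVec_testVector hk, hx, Pi.single_zero, sub_zero]⟩
  have h1 := congrFun h (pairedVertex ⟨0, hk0⟩)
  have h3 := congrFun h (Fin.last (k + 1))
  simp only [testVector_pairedVertex, Pi.zero_apply] at h1
  simp only [testVector_last, Pi.zero_apply] at h3
  linarith

theorem friendshipCubic_eq_zero_of_mem_spectrum (hk : Even k) {q : ℝ}
    (hq : q ∈ spectrum ℝ (signlessLaplacian (friendshipGraph (k + 2)))) (h1 : q ≠ 1)
    (h3 : q ≠ 3) : friendshipCubic (k + 2 : ℕ) q = 0 := by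
  obtain ⟨v, hv, hqv⟩ := (mem_spectrum_iff_exists_mulVec_eq_smul _ q).1 hq
  have row (i : Fin (k + 2)) :
      (signlessLaplacian (friendshipGraph (k + 2)) *ᵥ v) i = q * v i := by
    rw [hqv]; rfl
  have hlast : (q - 1) * v (Fin.last (k + 1)) = v 0 := by
    linear_combination (row (Fin.last (k + 1))).symm.trans (signlessLaplacian_mulVec_last hk v)
  have hpaired (j : Fin k) : (q - 3) * v (pairedVertex j) = v 0 := by
    have hj := (row _).symm.trans (signlessLaplacian_mulVec_pairedVertex hk v j)
    have hp := (row _).symm.trans (signlessLaplacian_mulVec_pairedVertex hk v (partner hk j))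
    rw [partner_partner] at hp
    have hsym : v (pairedVertex j) = v (pairedVertex (partner hk j)) := by
      have : (q - 1) * (v (pairedVertex j) - v (pairedVertex (partner hk j))) = 0 := by
        linear_combination hj - hp
      exact sub_eq_zero.1 ((mul_eq_zero.1 this).resolve_left (sub_ne_zero.2 h1))
    linear_combination hj - hsym
  have hcenter := (row 0).symm.trans (signlessLaplacian_mulVec_zero v)
  have hsum : (q - 3) * ∑ j, v (pairedVertex j) = k * v 0 := by
    simp [mul_sum, hpaired]
  have hv0 : v 0 ≠ 0 := by
    intro h0
    apply hv
    funext i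
    rcases eq_zero_or_eq_last_or_exists_pairedVertex i with rfl | rfl | ⟨j, rfl⟩
    · exact h0
    · exact (mul_eq_zero.1 (hlast.trans h0)).resolve_left (sub_ne_zero.2 h1)
    · exact (mul_eq_zero.1 ((hpaired j).trans h0)).resolve_left (sub_ne_zero.2 h3)
  refine (mul_eq_zero.1 (?_ : friendshipCubic (k + 2 : ℕ) q * v 0 = 0)).resolve_right hv0
  unfold friendshipCubic
  push_cast
  linear_combination (q - 1) * (q - 3) * hcenter + (q - 3) * hlast + (q - 1) * hsum

end friendshipGraph

open friendshipGraph in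
/-- For even `n ≥ 4`, `q(F_n)` is the largest real root of
`x³ - (n+3)x² + 3nx - 2n + 4 = 0`. -/
theorem stmt_3 (n : ℕ) (hn : 4 ≤ n) (heven : Even n) :
    (qIndex (friendshipGraph n)) ^ 3 - ((n : ℝ) + 3) * (qIndex (friendshipGraph n)) ^ 2
        + 3 * (n : ℝ) * qIndex (friendshipGraph n) - 2 * (n : ℝ) + 4 = 0 ∧
      ∀ x : ℝ, x ^ 3 - ((n : ℝ) + 3) * x ^ 2 + 3 * (n : ℝ) * x - 2 * (n : ℝ) + 4 = 0 →
        x ≤ qIndex (friendshipGraph n) := by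
  obtain ⟨k, rfl⟩ : ∃ k, n = k + 2 := ⟨n - 2, by omega⟩
  have hk : Even k := (Nat.even_add.1 heven).2 even_two
  have hspec := Matrix.finite_spectrum (signlessLaplacian (friendshipGraph (k + 2)))
  have hroot (x : ℝ) (hx : friendshipCubic (k + 2 : ℕ) x = 0) :=
    mem_spectrum_of_friendshipCubic_eq_zero hk (by omega) hx
  obtain ⟨r, hr3, hr⟩ := exists_friendshipCubic_root_gt_three (n := (k + 2 : ℕ))
    (by exact_mod_cast (by omega : 2 < k + 2))
  have hq : qIndex (friendshipGraph (k + 2)) ∈ _ := Set.Nonempty.csSup_mem ⟨r, hroot r hr⟩ hspec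
  have hrq : r ≤ qIndex (friendshipGraph (k + 2)) := le_csSup hspec.bddAbove (hroot r hr)
  exact ⟨friendshipCubic_eq_zero_of_mem_spectrum hk hq (by linarith) (by linarith),
    fun x hx => le_csSup hspec.bddAbove (hroot x hx)⟩
end

section
/- Let G be a simple graph of order n ≥ 4 containing no cycle of length 4 as a subgraph. If the maximum degree of G is at most n - 2, then q(G) ≤ n + 1/(n-2). -/
/-!
Weight each vertex by `c v = max (d v) 1`. For a matrix with nonnegative entries, comparing the
eigen-equation at a coordinate maximising `|x v| / c v` shows that every eigenvalue is at most
`max_u (Q c)_u / c_u` in absolute value. Neighbours have degree at least one, so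
`(Q c)_u = d_u c_u + ∑_{w ∼ u} d_w`. If `d_u ≤ 1`, the maximum-degree bound gives `(Q c)_u ≤ n - 1`.
If `d_u ≥ 2`, two distinct vertices of a `C₄`-free graph share at most one neighbour, so double
counting gives `∑_{w ∼ u} d_w ≤ d_u + n - 1`, and `d_u² + d_u + n - 1 ≤ (n + 1/(n-2)) d_u`
whenever `2 ≤ d_u ≤ n - 2`.
-/

open SimpleGraph

namespace Matrix

variable {ι : Type*} [Fintype ι] [DecidableEq ι] {M : Matrix ι ι ℝ} {c : ι → ℝ} {B : ℝ}

theorem abs_le_of_mem_spectrum_of_mulVec_le (hM : ∀ i j, 0 ≤ M i j) (hc : ∀ i, 0 < c i)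
    (hMc : ∀ i, (M *ᵥ c) i ≤ B * c i) {μ : ℝ} (hμ : μ ∈ spectrum ℝ M) : |μ| ≤ B := by
  rw [← spectrum_toLin', ← Module.End.hasEigenvalue_iff_mem_spectrum] at hμ
  obtain ⟨x, hx⟩ := hμ.exists_hasEigenvector
  have hMx : M *ᵥ x = μ • x := by simpa using hx.apply_eq_smul
  obtain ⟨j, hj⟩ : ∃ j, x j ≠ 0 := Function.ne_iff.1 hx.2
  obtain ⟨i₀, -, hmax⟩ :=
    Finset.univ.exists_max_image (fun i => |x i| / c i) ⟨j, Finset.mem_univ j⟩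
  set s := |x i₀| / c i₀
  have hx_le : ∀ i, |x i| ≤ s * c i := fun i =>
    (div_le_iff₀ (hc i)).1 (hmax i (Finset.mem_univ i))
  have hs : 0 < s := pos_of_mul_pos_left ((abs_pos.2 hj).trans_le (hx_le j)) (hc j).le
  have hx_i₀ : |x i₀| = s * c i₀ := (div_mul_cancel₀ _ (hc i₀).ne').symm
  refine le_of_mul_le_mul_right ?_ (hx_i₀ ▸ mul_pos hs (hc i₀))
  calc |μ| * |x i₀| = |∑ j, M i₀ j * x j| := by
        rw [← abs_mul, ← smul_eq_mul, ← Pi.smul_apply, ← hMx]; rfl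
    _ ≤ ∑ j, M i₀ j * |x j| := by
        refine (Finset.abs_sum_le_sum_abs _ _).trans_eq (Finset.sum_congr rfl fun j _ => ?_)
        rw [abs_mul, abs_of_nonneg (hM i₀ j)]
    _ ≤ ∑ j, M i₀ j * (s * c j) := by gcongr with j; exacts [hM i₀ j, hx_le j]
    _ = s * (M *ᵥ c) i₀ := by
        simp only [mulVec, dotProduct, Finset.mul_sum]
        exact Finset.sum_congr rfl fun j _ => by ring
    _ ≤ s * (B * c i₀) := by gcongr; exact hMc i₀
    _ = B * |x i₀| := by rw [hx_i₀]; ring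

theorem sSup_spectrum_le_of_mulVec_le [Nonempty ι] (hM : ∀ i j, 0 ≤ M i j)
    (hc : ∀ i, 0 < c i) (hMc : ∀ i, (M *ᵥ c) i ≤ B * c i) : sSup (spectrum ℝ M) ≤ B := by
  obtain ⟨i⟩ := ‹Nonempty ι›
  have hMc_nonneg : 0 ≤ (M *ᵥ c) i :=
    Finset.sum_nonneg fun j _ => mul_nonneg (hM i j) (hc j).le
  have hB : 0 ≤ B := nonneg_of_mul_nonneg_left (hMc_nonneg.trans (hMc i)) (hc i)
  exact Real.sSup_le (fun μ hμ =>
    (le_abs_self μ).trans (abs_le_of_mem_spectrum_of_mulVec_le hM hc hMc hμ)) hB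

end Matrix

theorem mul_add_add_le_mul_of_two_le_of_le_sub_two {N d : ℝ} (hd : 2 ≤ d) (hdN : d ≤ N - 2) :
    d * d + d + (N - 1) ≤ (N + 1 / (N - 2)) * d := by
  have hN : 0 < N - 2 := by linarith
  -- `(N - 2) · (rhs - lhs) = (N - 2 - d) · (d (N - 2) - (N - 1))`, a product of two nonnegatives.
  have hfactor : (N + 1 / (N - 2)) * d - (d * d + d + (N - 1))
      = (N - 2 - d) * (d * (N - 2) - (N - 1)) / (N - 2) := by
    field_simp
    ring
  have hsecond : 0 ≤ d * (N - 2) - (N - 1) := by nlinarith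
  have := div_nonneg (mul_nonneg (sub_nonneg.2 hdN) hsecond) hN.le
  linarith

open Matrix

namespace SimpleGraph

variable {V : Type*} {G : SimpleGraph V}

theorem containsCopy_cycleGraph_four {a b c d : V} (hac : a ≠ c) (hbd : b ≠ d)
    (hab : G.Adj a b) (hbc : G.Adj b c) (hcd : G.Adj c d) (hda : G.Adj d a) :
    ContainsCopy (cycleGraph 4) G := by
  refine ⟨⟨![a, b, c, d], fun i j hij => ?_⟩, fun i j hij => ?_⟩
  · have := hab.ne; have := hbc.ne; have := hcd.ne; have := hda.ne
    fin_cases i <;> fin_cases j <;> simp_all [eq_comm]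
  · change G.Adj (![a, b, c, d] i) (![a, b, c, d] j)
    fin_cases i <;> fin_cases j <;> first
      | exact absurd hij (by decide)
      | simp [hab, hbc, hcd, hda, hab.symm, hbc.symm, hcd.symm, hda.symm]

variable [Fintype V] [DecidableRel G.Adj]

theorem card_filter_adj_neighborFinset_le_one (hC4 : ¬ ContainsCopy (cycleGraph 4) G)
    {u z : V} (huz : u ≠ z) : ((G.neighborFinset u).filter (G.Adj · z)).card ≤ 1 := by
  refine Finset.card_le_one.2 fun w₁ hw₁ w₂ hw₂ => by_contra fun hw => hC4 ?_
  simp only [Finset.mem_filter, mem_neighborFinset] at hw₁ hw₂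
  exact containsCopy_cycleGraph_four huz hw hw₁.1 hw₁.2 hw₂.2.symm hw₂.1.symm

theorem sum_degree_neighborFinset_le [DecidableEq V] (hC4 : ¬ ContainsCopy (cycleGraph 4) G)
    (u : V) : ∑ w ∈ G.neighborFinset u, G.degree w ≤ G.degree u + (Fintype.card V - 1) := by
  have hcount : ∑ w ∈ G.neighborFinset u, G.degree w
      = ∑ z, ((G.neighborFinset u).filter (G.Adj · z)).card := by
    refine Eq.trans ?_ (Finset.sum_card_bipartiteAbove_eq_sum_card_bipartiteBelow G.Adj)
    refine Finset.sum_congr rfl fun w _ => ?_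
    rw [← card_neighborFinset_eq_degree, neighborFinset_eq_filter]
    rfl
  rw [hcount, ← Finset.add_sum_erase _ _ (Finset.mem_univ u)]
  gcongr
  · exact (Finset.card_filter_le _ _).trans (G.card_neighborFinset_eq_degree u).le
  · calc _ ≤ ∑ _z ∈ Finset.univ.erase u, 1 := Finset.sum_le_sum fun z hz =>
          card_filter_adj_neighborFinset_le_one hC4 (Finset.ne_of_mem_erase hz).symm
      _ = Fintype.card V - 1 := by simp [Finset.card_erase_of_mem]

variable [DecidableEq V]

theorem signlessLaplacian_eq :
    signlessLaplacian G = Matrix.diagonal (fun v => (G.degree v : ℝ)) + G.adjMatrix ℝ := by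
  unfold signlessLaplacian
  congr!

theorem signlessLaplacian_nonneg (u w : V) : 0 ≤ signlessLaplacian G u w := by
  rw [signlessLaplacian_eq, Matrix.add_apply, Matrix.diagonal_apply, adjMatrix_apply]
  positivity

theorem signlessLaplacian_mulVec_apply (y : V → ℝ) (u : V) :
    (signlessLaplacian G *ᵥ y) u = G.degree u * y u + ∑ w ∈ G.neighborFinset u, y w := by
  rw [signlessLaplacian_eq, Matrix.add_mulVec, Pi.add_apply, Matrix.mulVec_diagonal,
    adjMatrix_mulVec_apply]

theorem signlessLaplacian_mulVec_max_degree_one_le (hC4 : ¬ ContainsCopy (cycleGraph 4) G)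
    (hV : 2 < Fintype.card V) (hΔ : ∀ v, G.degree v ≤ Fintype.card V - 2) (u : V) :
    (signlessLaplacian G *ᵥ fun v => max (G.degree v : ℝ) 1) u
      ≤ (Fintype.card V + 1 / ((Fintype.card V : ℝ) - 2)) * max (G.degree u : ℝ) 1 := by
  set N : ℝ := (Fintype.card V : ℝ)
  have hN : 0 < N - 2 := by
    rw [sub_pos, show (2 : ℝ) = (2 : ℕ) by norm_num, Nat.cast_lt]; exact hV
  have hΔ' : ∀ v, (G.degree v : ℝ) ≤ N - 2 := fun v => by
    rw [← Nat.cast_ofNat, ← Nat.cast_sub hV.le]; exact_mod_cast hΔ v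
  have hnbr : ∑ w ∈ G.neighborFinset u, max (G.degree w : ℝ) 1
      = ∑ w ∈ G.neighborFinset u, (G.degree w : ℝ) := by
    refine Finset.sum_congr rfl fun w hw => max_eq_left ?_
    exact_mod_cast G.degree_pos_iff_exists_adj w |>.2 ⟨u, ((G.mem_neighborFinset u w).1 hw).symm⟩
  rw [signlessLaplacian_mulVec_apply, hnbr]
  rcases le_or_gt (G.degree u) 1 with hu | hu
  · have hu' : (G.degree u : ℝ) ≤ 1 := by exact_mod_cast hu
    have hsum : ∑ w ∈ G.neighborFinset u, (G.degree w : ℝ) ≤ G.degree u * (N - 2) := by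
      simpa using Finset.sum_le_card_nsmul (G.neighborFinset u) _ _ fun w _ => hΔ' w
    have : 0 < 1 / (N - 2) := one_div_pos.2 hN
    rw [max_eq_right hu']
    nlinarith [hΔ' u]
  · have hu' : (2 : ℝ) ≤ G.degree u := by exact_mod_cast hu
    have hsum : ∑ w ∈ G.neighborFinset u, (G.degree w : ℝ) ≤ G.degree u + (N - 1) := by
      have := sum_degree_neighborFinset_le hC4 u
      rw [← Nat.cast_one, ← Nat.cast_sub (by omega)]
      exact_mod_cast this
    rw [max_eq_left (by linarith)]
    linarith [mul_add_add_le_mul_of_two_le_of_le_sub_two hu' (hΔ' u)]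

end SimpleGraph

/-- If `G` has order `n ≥ 4`, no `C₄` as a subgraph, and maximum degree at most
`n - 2`, then `q(G) ≤ n + 1/(n-2)`. -/
theorem stmt_9 (n : ℕ) (hn : 4 ≤ n) (G : SimpleGraph (Fin n)) [DecidableRel G.Adj]
    (hC4 : ¬ ContainsCopy (cycleGraph 4) G)
    (hΔ : ∀ v : Fin n, G.degree v ≤ n - 2) :
    qIndex G ≤ (n : ℝ) + 1 / ((n : ℝ) - 2) := by
  have : Nonempty (Fin n) := ⟨⟨0, by omega⟩⟩
  refine Matrix.sSup_spectrum_le_of_mulVec_le G.signlessLaplacian_nonneg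
    (c := fun v => max (G.degree v : ℝ) 1) (fun v => by positivity) fun u => ?_
  simpa using G.signlessLaplacian_mulVec_max_degree_one_le hC4
    (by simp only [Fintype.card_fin]; omega) (by simpa using hΔ) u
end
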